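/- arXiv:2302.06311 — 2 statements merged into one kernel-verified Lean document; each statement's English description precedes it below -/
import Mathlib

section
/- Asymptotics of the variance sequence in the critical regime: for p = 3/4, lim_{n→∞} vₙ / log n = π/4. -/
open MeasureTheory ProbabilityTheory Filter Set

/-- The weights `aₙ = Γ(n)Γ(2p)/Γ(n+2p−1)` of the elephant random walk
(note that the formula also gives `a₁ = 1`). -/
noncomputable def erwA (p : ℝ) (n : ℕ) : ℝ :=
  Real.Gamma n * Real.Gamma (2 * p) / Real.Gamma ((n : ℝ) + 2 * p - 1)

/-- `vₙ = Σ_{i=1}^n aᵢ²`. -/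
noncomputable def erwV (p : ℝ) (n : ℕ) : ℝ :=
  ∑ i ∈ Finset.Icc 1 n, (erwA p i) ^ 2

/-!
For `p = 3/4` the functional equation of `Γ` gives `aₙ₊₁ = aₙ · 2n/(2n+1)`, so `(2n+1)aₙ₊₁²` is
exactly the `n`-th partial product of Wallis' formula and tends to `π/2`. Hence `n aₙ² → π/4`,
i.e. `aₙ² = π/(4n) + o(1/n)`, and summing this against the harmonic series, which grows like
`log n`, gives `vₙ ~ (π/4) log n`.
-/

open Asymptotics Real Topology

theorem tendsto_harmonic_div_log :
    Tendsto (fun n : ℕ => (harmonic n : ℝ) / log n) atTop (𝓝 1) := by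
  have hlog : Tendsto (fun n : ℕ => log n) atTop atTop :=
    tendsto_log_atTop.comp tendsto_natCast_atTop_atTop
  have h := (tendsto_harmonic_sub_log.div_atTop hlog).const_add 1
  rw [add_zero] at h
  refine h.congr' ?_
  filter_upwards [hlog.eventually_gt_atTop 0] with n hn
  field_simp
  ring

theorem isLittleO_sum_Icc_harmonic {e : ℕ → ℝ} (h : e =o[atTop] fun i : ℕ => (i : ℝ)⁻¹) :
    (fun n => ∑ i ∈ Finset.Icc 1 n, e i) =o[atTop] fun n => (harmonic n : ℝ) := by
  have hshift (f : ℕ → ℝ) (n : ℕ) :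
      ∑ i ∈ Finset.Icc 1 n, f i = ∑ i ∈ Finset.range n, f (i + 1) := by
    rw [Finset.range_eq_Ico, Finset.sum_Ico_add' f 0 n 1, Finset.Ico_add_one_right_eq_Icc]
  have hharmonic (n : ℕ) : (harmonic n : ℝ) = ∑ i ∈ Finset.range n, ((i + 1 : ℕ) : ℝ)⁻¹ := by
    rw [harmonic_eq_sum_Icc]
    push_cast
    exact_mod_cast hshift (fun i => (i : ℝ)⁻¹) n
  have htop : Tendsto (fun n => (harmonic n : ℝ)) atTop atTop :=
    tendsto_atTop_mono log_add_one_le_harmonic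
      (tendsto_log_atTop.comp (tendsto_natCast_atTop_atTop.comp (tendsto_add_atTop_nat 1)))
  simp only [hshift, hharmonic] at htop ⊢
  exact (h.comp_tendsto (tendsto_add_atTop_nat 1)).sum_range
    (fun _ => inv_nonneg.2 (Nat.cast_nonneg _)) htop

theorem tendsto_sum_Icc_div_log_of_tendsto_mul {b : ℕ → ℝ} {L : ℝ}
    (h : Tendsto (fun n : ℕ => n * b n) atTop (𝓝 L)) :
    Tendsto (fun n : ℕ => (∑ i ∈ Finset.Icc 1 n, b i) / log n) atTop (𝓝 L) := by
  set e : ℕ → ℝ := fun i => b i - L * (i : ℝ)⁻¹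
  have he : e =o[atTop] fun i : ℕ => (i : ℝ)⁻¹ := by
    refine (isLittleO_iff_tendsto' ?_).2 ?_
    · filter_upwards [eventually_ne_atTop 0] with i hi hi'
      simp [hi] at hi'
    · refine (sub_self L ▸ h.sub_const L).congr' ?_
      filter_upwards [eventually_ne_atTop 0] with i hi
      simp only [e]
      field_simp
  have hsplit (n : ℕ) :
      ∑ i ∈ Finset.Icc 1 n, b i = L * harmonic n + ∑ i ∈ Finset.Icc 1 n, e i := by
    simp only [e, Finset.sum_sub_distrib, ← Finset.mul_sum, harmonic_eq_sum_Icc]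
    push_cast
    ring
  have hH := tendsto_harmonic_div_log
  have h := (hH.const_mul L).add ((isLittleO_sum_Icc_harmonic he).tendsto_div_nhds_zero.mul hH)
  rw [mul_one, zero_mul, add_zero] at h
  refine h.congr' ?_
  filter_upwards [eventually_ne_atTop 0] with n hn
  have hHn : (harmonic n : ℝ) ≠ 0 := by exact_mod_cast (harmonic_pos hn).ne'
  rw [hsplit]
  field_simp

theorem erwA_succ (p : ℝ) {n : ℕ} (hn : n ≠ 0) (hp : (n : ℝ) + 2 * p - 1 ≠ 0) :
    erwA p (n + 1) = erwA p n * (n / (n + 2 * p - 1)) := by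
  unfold erwA
  push_cast
  rw [show (n : ℝ) + 1 + 2 * p - 1 = (n + 2 * p - 1) + 1 by ring, Gamma_add_one hp,
    Gamma_add_one (Nat.cast_ne_zero.2 hn)]
  simp only [div_eq_mul_inv, mul_inv]
  ring

theorem wallis_W_eq_mul_erwA_sq (n : ℕ) :
    Wallis.W n = (2 * n + 1) * erwA (3 / 4) (n + 1) ^ 2 := by
  induction n with
  | zero =>
    have : Gamma (3 / 2) ≠ 0 := (Gamma_pos_of_pos (by norm_num)).ne'
    norm_num [Wallis.W, erwA, this]
  | succ n ih =>
    have hden : ((n + 1 : ℕ) : ℝ) + 2 * (3 / 4) - 1 = (2 * n + 3) / 2 := by push_cast; ring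
    rw [Wallis.W_succ, ih, erwA_succ (3 / 4) n.succ_ne_zero (by rw [hden]; positivity), hden]
    push_cast
    field_simp
    ring

theorem tendsto_mul_erwA_sq :
    Tendsto (fun n : ℕ => n * erwA (3 / 4) n ^ 2) atTop (𝓝 (π / 4)) := by
  rw [← tendsto_add_atTop_iff_nat 1]
  have h := Wallis.tendsto_W_nhds_pi_div_two.mul
    (tendsto_add_mul_div_add_mul_atTop_nhds (1 : ℝ) 1 1 two_ne_zero)
  convert h using 2 with n
  · rw [wallis_W_eq_mul_erwA_sq]
    push_cast
    field_simp
    ring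
  · ring

/-- Asymptotics of the variance sequence in the critical regime `p = 3/4`:
`lim_{n→∞} vₙ / log n = π/4`. -/
theorem erw_v_asymptotics_critical :
    Tendsto (fun n : ℕ => erwV (3 / 4) n / Real.log n) atTop
      (nhds (Real.pi / 4)) :=
  tendsto_sum_Icc_div_log_of_tendsto_mul tendsto_mul_erwA_sq
end

section
/- Weighted tail-sum estimate: let p ∈ (0, 3/4), β ≥ 1 and α ∈ ℝ, and for n ≥ 2 set κₙ² = max_{⌊n/2⌋ ≤ i ≤ n} aᵢ² and t_{k,n} = (β κₙ² + vₙ − v_k)^{1/2} for 0 ≤ k ≤ n. Then there exists a constant C > 0 (depending only on p, α and β) such that, for all sufficiently large n, Σ_{k=⌊n/2⌋+1}^{n} t_{k,n}^{α} · a_k² / t_{k,n}² is at most C κₙ^{α} β^{α/2} if α < 0, at most C log n if α = 0, and at most C vₙ^{α/2} if α > 0. -/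
open MeasureTheory ProbabilityTheory Filter Set

/-- `κₙ² = max_{⌊n/2⌋ ≤ i ≤ n} aᵢ²`. -/
noncomputable def erwKappaSq (p : ℝ) (n : ℕ) : ℝ :=
  ⨆ i ∈ Set.Icc (n / 2) n, (erwA p i) ^ 2

/-- `t_{k,n} = (β κₙ² + vₙ − v_k)^{1/2}`. -/
noncomputable def erwT (p b : ℝ) (k n : ℕ) : ℝ :=
  Real.sqrt (b * erwKappaSq p n + erwV p n - erwV p k)

/-!
With `s_k = t_{k,n}² = βκₙ² + vₙ - v_k` we have `a_k² = s_{k-1} - s_k`, so the sum is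
`Σ s_k^{α/2-1} (s_{k-1} - s_k)`, a Riemann sum for `∫ t^{α/2-1} dt` over `[s_n, s_{⌊n/2⌋}]`.
Its mesh satisfies `a_k² ≤ κₙ² ≤ βκₙ² ≤ s_k`, so consecutive nodes differ by a factor at most 2
and the sum is at most `max 1 2^{1-α/2}` times the integral. The integral is at most
`(βκₙ²)^{α/2} / (-α/2)` for `α < 0`, `log (s_{⌊n/2⌋} / s_n) ≤ log n²` for `α = 0` (because
`vₙ - v_{⌊n/2⌋} ≤ nκₙ²`), and `((1 + β) vₙ)^{α/2} / (α/2)` for `α > 0`.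
-/

section RiemannSum

variable {γ : ℝ}

lemma intervalIntegrable_rpow_of_pos {a b : ℝ} (ha : 0 < a) (hb : 0 < b) (r : ℝ) :
    IntervalIntegrable (fun t : ℝ ↦ t ^ r) (volume : Measure ℝ) a b :=
  intervalIntegral.intervalIntegrable_rpow (Or.inr (Set.notMem_uIcc_of_lt ha hb))

lemma rpow_sub_one_le_max_mul_rpow_sub_one {y t : ℝ} (hy : 0 < y) (hyt : y ≤ t)
    (ht : t ≤ 2 * y) : y ^ (γ - 1) ≤ max 1 (2 ^ (1 - γ)) * t ^ (γ - 1) := by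
  rcases le_total 1 γ with hγ | hγ
  · calc y ^ (γ - 1) ≤ t ^ (γ - 1) := Real.rpow_le_rpow hy.le hyt (by linarith)
      _ ≤ _ := le_mul_of_one_le_left (Real.rpow_nonneg (hy.le.trans hyt) _) (le_max_left _ _)
  · calc y ^ (γ - 1) = 2 ^ (1 - γ) * (2 * y) ^ (γ - 1) := by
          rw [Real.mul_rpow (by norm_num) hy.le, ← mul_assoc, ← Real.rpow_add (by norm_num)]
          simp
      _ ≤ 2 ^ (1 - γ) * t ^ (γ - 1) := by
          gcongr 2 ^ (1 - γ) * ?_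
          exact Real.rpow_le_rpow_of_nonpos (hy.trans_le hyt) ht (by linarith)
      _ ≤ _ := mul_le_mul_of_nonneg_right (le_max_right _ _)
          (Real.rpow_nonneg (hy.le.trans hyt) _)

lemma rpow_sub_one_mul_sub_le_integral {x y : ℝ} (hy : 0 < y) (hyx : y ≤ x) (hx : x ≤ 2 * y) :
    y ^ (γ - 1) * (x - y) ≤ max 1 (2 ^ (1 - γ)) * ∫ t in y..x, t ^ (γ - 1) := by
  rw [← intervalIntegral.integral_const_mul, mul_comm, ← smul_eq_mul,
    ← intervalIntegral.integral_const]
  exact intervalIntegral.integral_mono_on hyx intervalIntegrable_const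
    ((intervalIntegrable_rpow_of_pos hy (hy.trans_le hyx) _).const_mul _)
    fun t ht ↦ rpow_sub_one_le_max_mul_rpow_sub_one hy ht.1 (ht.2.trans hx)

lemma sum_rpow_sub_one_mul_sub_le_integral {s : ℕ → ℝ} {m n : ℕ} (hmn : m ≤ n)
    (hpos : ∀ k ∈ Finset.Icc m n, 0 < s k)
    (hstep : ∀ k ∈ Finset.Icc (m + 1) n, s k ≤ s (k - 1) ∧ s (k - 1) ≤ 2 * s k) :
    ∑ k ∈ Finset.Icc (m + 1) n, s k ^ (γ - 1) * (s (k - 1) - s k)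
      ≤ max 1 (2 ^ (1 - γ)) * ∫ t in s n..s m, t ^ (γ - 1) := by
  induction n, hmn using Nat.le_induction with
  | base => simp
  | succ n hmn ih =>
    have hpos' : ∀ k ∈ Finset.Icc m n, 0 < s k := fun k hk ↦
      hpos k (Finset.Icc_subset_Icc_right n.le_succ hk)
    have hstep' : ∀ k ∈ Finset.Icc (m + 1) n, s k ≤ s (k - 1) ∧ s (k - 1) ≤ 2 * s k :=
      fun k hk ↦ hstep k (Finset.Icc_subset_Icc_right n.le_succ hk)
    obtain ⟨hle, hdouble⟩ := hstep (n + 1) (by simp; omega)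
    simp only [Nat.add_sub_cancel] at hle hdouble
    have hsucc := hpos (n + 1) (by simp; omega)
    have hn := hpos n (by simp; omega)
    have hm := hpos m (by simp; omega)
    rw [Finset.sum_Icc_succ_top (by omega), Nat.add_sub_cancel,
      ← intervalIntegral.integral_add_adjacent_intervals
        (intervalIntegrable_rpow_of_pos hsucc hn _) (intervalIntegrable_rpow_of_pos hn hm _),
      mul_add, add_comm]
    exact add_le_add (rpow_sub_one_mul_sub_le_integral hsucc hle hdouble) (ih hpos' hstep')

lemma integral_rpow_sub_one_le_of_neg (hγ : γ < 0) {a b : ℝ} (ha : 0 < a) (hb : 0 < b) :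
    ∫ t in a..b, t ^ (γ - 1) ≤ a ^ γ / -γ := by
  rw [integral_rpow (Or.inr ⟨by linarith, Set.notMem_uIcc_of_lt ha hb⟩),
    sub_add_cancel, ← neg_div_neg_eq, neg_sub]
  exact div_le_div_of_nonneg_right (sub_le_self _ (Real.rpow_nonneg hb.le _)) (by linarith)

lemma integral_rpow_sub_one_le_of_pos (hγ : 0 < γ) {a b : ℝ} (ha : 0 ≤ a) :
    ∫ t in a..b, t ^ (γ - 1) ≤ b ^ γ / γ := by
  rw [integral_rpow (Or.inl (by linarith)), sub_add_cancel]
  exact div_le_div_of_nonneg_right (sub_le_self _ (Real.rpow_nonneg ha _)) hγ.le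

lemma integral_rpow_neg_one {a b : ℝ} (ha : 0 < a) (hb : 0 < b) :
    ∫ t in a..b, t ^ (-1 : ℝ) = Real.log (b / a) := by
  simp only [Real.rpow_neg_one]
  exact integral_inv_of_pos ha hb

end RiemannSum

lemma erwA_pos {p : ℝ} (hp : 0 < p) {i : ℕ} (hi : 1 ≤ i) : 0 < erwA p i := by
  have hi' : (1 : ℝ) ≤ i := by exact_mod_cast hi
  unfold erwA
  have := Real.Gamma_pos_of_pos (show (0 : ℝ) < i by linarith)
  have := Real.Gamma_pos_of_pos (show 0 < 2 * p by linarith)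
  have := Real.Gamma_pos_of_pos (show (0 : ℝ) < i + 2 * p - 1 by linarith)
  positivity

lemma erwV_succ (p : ℝ) (k : ℕ) : erwV p (k + 1) = erwV p k + erwA p (k + 1) ^ 2 :=
  Finset.sum_Icc_succ_top (by omega) _

lemma erwV_nonneg (p : ℝ) (n : ℕ) : 0 ≤ erwV p n :=
  Finset.sum_nonneg fun _ _ ↦ sq_nonneg _

lemma erwV_mono (p : ℝ) : Monotone (erwV p) :=
  monotone_nat_of_le_succ fun k ↦ by rw [erwV_succ]; exact le_add_of_nonneg_right (sq_nonneg _)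

lemma erwV_sub_erwV (p : ℝ) {m n : ℕ} (hmn : m ≤ n) :
    erwV p n - erwV p m = ∑ i ∈ Finset.Ioc m n, erwA p i ^ 2 := by
  have hIoc (k : ℕ) : erwV p k = ∑ i ∈ Finset.Ioc 0 k, erwA p i ^ 2 := by
    rw [erwV, ← Finset.Icc_add_one_left_eq_Ioc, zero_add]
  rw [hIoc, hIoc, ← Finset.sum_Ioc_consecutive _ (Nat.zero_le m) hmn, add_sub_cancel_left]

lemma sq_erwA_le_erwKappaSq (p : ℝ) {n k : ℕ} (hk : k ∈ Set.Icc (n / 2) n) :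
    erwA p k ^ 2 ≤ erwKappaSq p n := by
  refine le_ciSup₂ (f := fun i (_ : i ∈ Set.Icc (n / 2) n) ↦ erwA p i ^ 2) ?_ k hk
  refine ((Set.finite_Icc (n / 2) n).image fun i ↦ erwA p i ^ 2).bddAbove.mono ?_
  intro x hx
  simp only [Set.mem_iUnion, Set.mem_range] at hx
  obtain ⟨i, hi, rfl⟩ := hx
  exact Set.mem_image_of_mem _ hi

lemma erwKappaSq_pos {p : ℝ} (hp : 0 < p) {n : ℕ} (hn : 1 ≤ n) : 0 < erwKappaSq p n :=
  (pow_pos (erwA_pos hp hn) 2).trans_le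
    (sq_erwA_le_erwKappaSq p ⟨Nat.div_le_self n 2, le_rfl⟩)

lemma erwKappaSq_le_erwV (p : ℝ) {n : ℕ} (hn : 2 ≤ n) : erwKappaSq p n ≤ erwV p n :=
  Real.iSup_le (fun i ↦ Real.iSup_le (fun hi ↦
    Finset.single_le_sum (f := fun j ↦ erwA p j ^ 2) (fun _ _ ↦ sq_nonneg _)
      (Finset.mem_Icc.mpr ⟨le_trans (by omega) hi.1, hi.2⟩)) (erwV_nonneg p n))
    (erwV_nonneg p n)

noncomputable def erwTSq (p b : ℝ) (k n : ℕ) : ℝ :=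
  b * erwKappaSq p n + erwV p n - erwV p k

section TailSum

variable {p b : ℝ} {k n : ℕ}

lemma erwTSq_self : erwTSq p b n n = b * erwKappaSq p n :=
  add_sub_cancel_right _ _

lemma erwTSq_pred_sub (hk : 1 ≤ k) : erwTSq p b (k - 1) n - erwTSq p b k n = erwA p k ^ 2 := by
  obtain ⟨j, rfl⟩ := Nat.exists_eq_add_of_le' hk
  rw [erwTSq, erwTSq, Nat.add_sub_cancel, erwV_succ]
  ring

lemma erwTSq_pos (hp : 0 < p) (hb : 0 < b) (hn : 1 ≤ n) (hkn : k ≤ n) : 0 < erwTSq p b k n := by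
  have := mul_pos hb (erwKappaSq_pos hp hn)
  have := erwV_mono p hkn
  unfold erwTSq
  linarith

lemma erwTSq_pred_le_two_mul (hb : 1 ≤ b) (hk : n / 2 < k) (hkn : k ≤ n) :
    erwTSq p b (k - 1) n ≤ 2 * erwTSq p b k n := by
  have hak : erwA p k ^ 2 ≤ erwKappaSq p n := sq_erwA_le_erwKappaSq p ⟨hk.le, hkn⟩
  have hκ : erwKappaSq p n ≤ b * erwKappaSq p n :=
    le_mul_of_one_le_left ((sq_nonneg _).trans hak) hb
  have := erwV_mono p hkn
  have := erwTSq_pred_sub (p := p) (b := b) (n := n) (show 1 ≤ k by omega)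
  unfold erwTSq at *
  linarith

lemma erwTSq_half_le_sq_mul (hb : 1 ≤ b) (hn : 2 ≤ n) :
    erwTSq p b (n / 2) n ≤ (n : ℝ) ^ 2 * erwTSq p b n n := by
  have hκ : 0 ≤ erwKappaSq p n :=
    (sq_nonneg _).trans (sq_erwA_le_erwKappaSq p ⟨Nat.div_le_self n 2, le_rfl⟩)
  have hv : erwV p n - erwV p (n / 2) ≤ n * erwKappaSq p n := by
    rw [erwV_sub_erwV p (Nat.div_le_self n 2)]
    calc ∑ i ∈ Finset.Ioc (n / 2) n, erwA p i ^ 2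
        ≤ (Finset.Ioc (n / 2) n).card • erwKappaSq p n :=
          Finset.sum_le_card_nsmul _ _ _ fun i hi ↦
            sq_erwA_le_erwKappaSq p ⟨(Finset.mem_Ioc.1 hi).1.le, (Finset.mem_Ioc.1 hi).2⟩
      _ ≤ n * erwKappaSq p n := by
          rw [Nat.card_Ioc, nsmul_eq_mul]
          gcongr
          exact_mod_cast Nat.sub_le n (n / 2)
  have hn' : (2 : ℝ) ≤ n := by exact_mod_cast hn
  have h1 : n * erwKappaSq p n ≤ ((n : ℝ) ^ 2 - 1) * erwKappaSq p n :=
    mul_le_mul_of_nonneg_right (by nlinarith) hκ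
  have h2 : ((n : ℝ) ^ 2 - 1) * erwKappaSq p n ≤ ((n : ℝ) ^ 2 - 1) * (b * erwKappaSq p n) :=
    mul_le_mul_of_nonneg_left (le_mul_of_one_le_left hκ hb) (by nlinarith)
  rw [erwTSq_self, erwTSq]
  linarith

lemma erwTSq_half_le (hb : 0 ≤ b) (hn : 2 ≤ n) :
    erwTSq p b (n / 2) n ≤ (b + 1) * erwV p n := by
  have := mul_le_mul_of_nonneg_left (erwKappaSq_le_erwV p hn) hb
  have := erwV_nonneg p (n / 2)
  unfold erwTSq
  linarith

lemma sqrt_rpow_mul_div_sqrt_sq {s : ℝ} (hs : 0 < s) (a d : ℝ) :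
    √s ^ a * d / √s ^ 2 = s ^ (a / 2 - 1) * d := by
  rw [Real.sq_sqrt hs.le, Real.sqrt_eq_rpow, ← Real.rpow_mul hs.le, Real.rpow_sub hs,
    Real.rpow_one]
  ring_nf

lemma erw_tail_sum_le_integral (hp : 0 < p) (hb : 1 ≤ b) (hn : 1 ≤ n) (a : ℝ) :
    ∑ k ∈ Finset.Icc (n / 2 + 1) n, erwT p b k n ^ a * erwA p k ^ 2 / erwT p b k n ^ 2
      ≤ max 1 (2 ^ (1 - a / 2)) *
          ∫ t in erwTSq p b n n..erwTSq p b (n / 2) n, t ^ (a / 2 - 1) := by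
  have hpos (k : ℕ) (hkn : k ≤ n) : 0 < erwTSq p b k n :=
    erwTSq_pos hp (by linarith) hn hkn
  have hterm : ∀ k ∈ Finset.Icc (n / 2 + 1) n,
      erwT p b k n ^ a * erwA p k ^ 2 / erwT p b k n ^ 2
        = erwTSq p b k n ^ (a / 2 - 1) * (erwTSq p b (k - 1) n - erwTSq p b k n) := by
    intro k hk
    rw [Finset.mem_Icc] at hk
    rw [erwTSq_pred_sub (by omega)]
    exact sqrt_rpow_mul_div_sqrt_sq (hpos k hk.2) a _
  rw [Finset.sum_congr rfl hterm]
  refine sum_rpow_sub_one_mul_sub_le_integral (Nat.div_le_self n 2)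
    (fun k hk ↦ hpos k (Finset.mem_Icc.1 hk).2) fun k hk ↦ ?_
  rw [Finset.mem_Icc] at hk
  have hstep := erwTSq_pred_sub (p := p) (b := b) (n := n) (show 1 ≤ k by omega)
  exact ⟨by linarith [sq_nonneg (erwA p k)], erwTSq_pred_le_two_mul hb (by omega) hk.2⟩

lemma erw_tail_sum_le_of_neg (hp : 0 < p) (hb : 1 ≤ b) (hn : 2 ≤ n) {a : ℝ} (ha : a < 0) :
    ∑ k ∈ Finset.Icc (n / 2 + 1) n, erwT p b k n ^ a * erwA p k ^ 2 / erwT p b k n ^ 2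
      ≤ max 1 (2 ^ (1 - a / 2)) / -(a / 2) * √(erwKappaSq p n) ^ a * b ^ (a / 2) := by
  have hb0 : 0 < b := by linarith
  have hκ := erwKappaSq_pos hp (show 1 ≤ n by omega)
  calc _ ≤ max 1 (2 ^ (1 - a / 2)) *
          ∫ t in erwTSq p b n n..erwTSq p b (n / 2) n, t ^ (a / 2 - 1) :=
        erw_tail_sum_le_integral hp hb (by omega) a
    _ ≤ max 1 (2 ^ (1 - a / 2)) * (erwTSq p b n n ^ (a / 2) / -(a / 2)) := by
        gcongr
        exact integral_rpow_sub_one_le_of_neg (by linarith) (erwTSq_pos hp hb0 (by omega) le_rfl)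
          (erwTSq_pos hp hb0 (by omega) (Nat.div_le_self n 2))
    _ = _ := by
        rw [erwTSq_self, Real.mul_rpow hb0.le hκ.le, Real.sqrt_eq_rpow, ← Real.rpow_mul hκ.le]
        ring_nf

lemma erw_tail_sum_le_log (hp : 0 < p) (hb : 1 ≤ b) (hn : 2 ≤ n) :
    ∑ k ∈ Finset.Icc (n / 2 + 1) n, erwT p b k n ^ (0 : ℝ) * erwA p k ^ 2 / erwT p b k n ^ 2
      ≤ 4 * Real.log n := by
  have hsn : 0 < erwTSq p b n n := erwTSq_pos hp (by linarith) (by omega) le_rfl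
  have hsm : 0 < erwTSq p b (n / 2) n :=
    erwTSq_pos hp (by linarith) (by omega) (Nat.div_le_self n 2)
  calc _ ≤ max 1 (2 ^ (1 - (0 : ℝ) / 2)) *
          ∫ t in erwTSq p b n n..erwTSq p b (n / 2) n, t ^ ((0 : ℝ) / 2 - 1) :=
        erw_tail_sum_le_integral hp hb (by omega) 0
    _ = 2 * Real.log (erwTSq p b (n / 2) n / erwTSq p b n n) := by
        rw [show (0 : ℝ) / 2 - 1 = -1 by norm_num, integral_rpow_neg_one hsn hsm]
        norm_num
    _ ≤ 2 * Real.log ((n : ℝ) ^ 2) := by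
        gcongr
        exact div_le_of_le_mul₀ hsn.le (by positivity) (erwTSq_half_le_sq_mul hb hn)
    _ = 4 * Real.log n := by rw [Real.log_pow]; push_cast; ring

lemma erw_tail_sum_le_of_pos (hp : 0 < p) (hb : 1 ≤ b) (hn : 2 ≤ n) {a : ℝ} (ha : 0 < a) :
    ∑ k ∈ Finset.Icc (n / 2 + 1) n, erwT p b k n ^ a * erwA p k ^ 2 / erwT p b k n ^ 2
      ≤ max 1 (2 ^ (1 - a / 2)) * (b + 1) ^ (a / 2) / (a / 2) * erwV p n ^ (a / 2) := by
  have hb0 : 0 < b := by linarith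
  calc _ ≤ max 1 (2 ^ (1 - a / 2)) *
          ∫ t in erwTSq p b n n..erwTSq p b (n / 2) n, t ^ (a / 2 - 1) :=
        erw_tail_sum_le_integral hp hb (by omega) a
    _ ≤ max 1 (2 ^ (1 - a / 2)) * (erwTSq p b (n / 2) n ^ (a / 2) / (a / 2)) := by
        gcongr
        exact integral_rpow_sub_one_le_of_pos (by linarith)
          (erwTSq_pos hp hb0 (by omega) le_rfl).le
    _ ≤ max 1 (2 ^ (1 - a / 2)) * (((b + 1) * erwV p n) ^ (a / 2) / (a / 2)) := by
        gcongr
        · exact (erwTSq_pos hp hb0 (by omega) (Nat.div_le_self n 2)).le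
        · exact erwTSq_half_le hb0.le hn
    _ = _ := by
        rw [Real.mul_rpow (by linarith) (erwV_nonneg p n)]
        ring

end TailSum

/-- Weighted tail-sum estimate: for `p ∈ (0, 3/4)`, `β ≥ 1` and `α ∈ ℝ`, there is a constant
`C > 0` such that for all sufficiently large `n`,
`Σ_{k=⌊n/2⌋+1}^{n} t_{k,n}^α · a_k² / t_{k,n}²` is at most `C κₙ^α β^{α/2}` if `α < 0`,
at most `C log n` if `α = 0`, and at most `C vₙ^{α/2}` if `α > 0`. -/
theorem erw_weighted_tail_sum (p : ℝ) (hp : p ∈ Set.Ioo (0 : ℝ) (3 / 4))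
    (b : ℝ) (hb : 1 ≤ b) (a : ℝ) :
    ∃ C > (0 : ℝ), ∃ N : ℕ, ∀ n : ℕ, N ≤ n →
      ((a < 0 →
        ∑ k ∈ Finset.Icc (n / 2 + 1) n, erwT p b k n ^ a * (erwA p k) ^ 2 / erwT p b k n ^ 2
          ≤ C * Real.sqrt (erwKappaSq p n) ^ a * b ^ (a / 2)) ∧
      (a = 0 →
        ∑ k ∈ Finset.Icc (n / 2 + 1) n, erwT p b k n ^ a * (erwA p k) ^ 2 / erwT p b k n ^ 2
          ≤ C * Real.log n) ∧
      (0 < a →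
        ∑ k ∈ Finset.Icc (n / 2 + 1) n, erwT p b k n ^ a * (erwA p k) ^ 2 / erwT p b k n ^ 2
          ≤ C * erwV p n ^ (a / 2))) := by
  obtain ⟨hp0, -⟩ := hp
  rcases lt_trichotomy a 0 with ha | rfl | ha
  · exact ⟨_, div_pos (lt_max_of_lt_left one_pos) (by linarith), 2, fun n hn ↦
      ⟨fun _ ↦ erw_tail_sum_le_of_neg hp0 hb hn ha, fun h ↦ absurd h ha.ne,
        fun h ↦ absurd h ha.not_gt⟩⟩
  · exact ⟨4, by norm_num, 2, fun n hn ↦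
      ⟨fun h ↦ absurd h (lt_irrefl 0), fun _ ↦ erw_tail_sum_le_log hp0 hb hn,
        fun h ↦ absurd h (lt_irrefl 0)⟩⟩
  · exact ⟨_, by positivity, 2, fun n hn ↦
      ⟨fun h ↦ absurd h ha.not_gt, fun h ↦ absurd h ha.ne',
        fun _ ↦ erw_tail_sum_le_of_pos hp0 hb hn ha⟩⟩
end
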